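/- For every smooth vector field v on 𝕋³ the identity ℛ(v) = 𝒮(v) + ℛ(v − div 𝒮(v)) holds, where 𝒮(w) := ∇w + (∇w)ᵀ − (2/3)(div w)Id and ℛ is the inverse-divergence operator of Definition 'reyn_op'. -/

import Mathlib

open MeasureTheory Real
noncomputable section

abbrev X3 := Fin 3 → ℝ

/-- `2π`-periodicity in each coordinate. -/
def TPeriodic {E : Type*} (f : X3 → E) : Prop :=
  ∀ (x : X3) (k : Fin 3 → ℤ), f (x + fun i => 2 * π * (k i : ℝ)) = f x

/-- A fundamental domain of the torus. -/
def cube : Set X3 := Set.Icc 0 (fun _ => 2 * π)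

/-- `i`-th partial derivative. -/
def pd {E : Type*} [NormedAddCommGroup E] [NormedSpace ℝ E]
    (i : Fin 3) (f : X3 → E) (x : X3) : E :=
  fderiv ℝ f x (Pi.single i 1)

def dotR (a b : X3) : ℝ := ∑ i, a i * b i

def crossR (a b : X3) : X3 :=
  ![a 1 * b 2 - a 2 * b 1, a 2 * b 0 - a 0 * b 2, a 0 * b 1 - a 1 * b 0]

def dotC (a b : Fin 3 → ℂ) : ℂ := ∑ i, a i * b i

/-- sup norm. -/
def C0 {E : Type*} [NormedAddCommGroup E] (f : X3 → E) : ℝ := ⨆ x, ‖f x‖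

/-- Hölder seminorm of integer order `m`. -/
def semiNat {E : Type*} [NormedAddCommGroup E] [NormedSpace ℝ E]
    (m : ℕ) (f : X3 → E) : ℝ :=
  ⨆ x, ‖iteratedFDeriv ℝ m f x‖

open Classical in
def Hsemi {E : Type*} [NormedAddCommGroup E] [NormedSpace ℝ E]
    (s : ℝ) (f : X3 → E) : ℝ :=
  if s = (⌊s⌋₊ : ℝ) then semiNat ⌊s⌋₊ f
  else ⨆ x, ⨆ y,
    ‖iteratedFDeriv ℝ ⌊s⌋₊ f x - iteratedFDeriv ℝ ⌊s⌋₊ f y‖ / ‖x - y‖ ^ (s - (⌊s⌋₊ : ℝ))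

open Classical in
def Hnorm {E : Type*} [NormedAddCommGroup E] [NormedSpace ℝ E]
    (r : ℝ) (f : X3 → E) : ℝ :=
  (∑ j ∈ Finset.range (⌊r⌋₊ + 1), semiNat j f) +
    (if r = (⌊r⌋₊ : ℝ) then 0 else Hsemi r f)


/-- `IsInvDivR v R` holds iff `R = ℛ v` arises from the construction of the
inverse-divergence operator: `Δu = v − ⨍v` with `⨍u = 0`, `𝒫u` the Leray
projection of `u` (divergence-free, differing from `u` by a gradient), and
`R = (1/4)(∇𝒫u + (∇𝒫u)ᵀ) + (3/4)(∇u + (∇u)ᵀ) − (1/2)(div u) Id`. -/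
def IsInvDivR (v : X3 → X3) (R : X3 → Fin 3 → Fin 3 → ℝ) : Prop :=
  ∃ u Pu : X3 → X3, ∃ φ : X3 → ℝ,
    ContDiff ℝ (⊤ : ℕ∞) u ∧ TPeriodic u ∧ ContDiff ℝ (⊤ : ℕ∞) Pu ∧ TPeriodic Pu ∧ ContDiff ℝ (⊤ : ℕ∞) φ ∧
    (∀ i, (∫ x in cube, u x i) = 0) ∧
    (∀ x i, (∑ j, pd j (fun y => pd j (fun z => u z i) y) x) =
      v x i - ((2 * π) ^ 3)⁻¹ * ∫ y in cube, v y i) ∧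
    (∀ x, ∑ i, pd i (fun y => Pu y i) x = 0) ∧
    (∀ x i, u x i - Pu x i = pd i φ x) ∧
    (∀ x i j, R x i j =
      (1 / 4) * (pd j (fun y => Pu y i) x + pd i (fun y => Pu y j) x) +
      (3 / 4) * (pd j (fun y => u y i) x + pd i (fun y => u y j) x) -
      (1 / 2) * (if i = j then (∑ l, pd l (fun y => u y l) x) else 0))

/-! ### Auxiliary lemmas about partial derivatives on the torus -/

lemma contDiff_pd {f : X3 → ℝ} (hf : ContDiff ℝ (⊤ : ℕ∞) f) (i : Fin 3) :
    ContDiff ℝ (⊤ : ℕ∞) (pd i f) := by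
  have h1 : ContDiff ℝ (⊤ : ℕ∞) (fderiv ℝ f) := hf.fderiv_right (by simp)
  exact h1.clm_apply contDiff_const

lemma pd_sub {f g : X3 → ℝ} (hf : ContDiff ℝ (⊤ : ℕ∞) f) (hg : ContDiff ℝ (⊤ : ℕ∞) g)
    (i : Fin 3) (x : X3) :
    pd i (fun y => f y - g y) x = pd i f x - pd i g x := by
  have := fderiv_fun_sub (𝕜 := ℝ) (hf.differentiable (by simp) x) (hg.differentiable (by simp) x)
  simp only [pd, this, ContinuousLinearMap.sub_apply]

lemma pd_add {f g : X3 → ℝ} (hf : ContDiff ℝ (⊤ : ℕ∞) f) (hg : ContDiff ℝ (⊤ : ℕ∞) g)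
    (i : Fin 3) (x : X3) :
    pd i (fun y => f y + g y) x = pd i f x + pd i g x := by
  have := fderiv_fun_add (𝕜 := ℝ) (hf.differentiable (by simp) x) (hg.differentiable (by simp) x)
  simp only [pd, this, ContinuousLinearMap.add_apply]

lemma pd_const_mul {f : X3 → ℝ} (hf : ContDiff ℝ (⊤ : ℕ∞) f) (c : ℝ) (i : Fin 3) (x : X3) :
    pd i (fun y => c * f y) x = c * pd i f x := by
  have := fderiv_const_mul (𝕜 := ℝ) (hf.differentiable (by simp) x) c
  simp only [pd, this, ContinuousLinearMap.smul_apply, smul_eq_mul]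

lemma pd_mul {f g : X3 → ℝ} (hf : ContDiff ℝ (⊤ : ℕ∞) f) (hg : ContDiff ℝ (⊤ : ℕ∞) g)
    (i : Fin 3) (x : X3) :
    pd i (fun y => f y * g y) x = f x * pd i g x + g x * pd i f x := by
  have := fderiv_fun_mul (𝕜 := ℝ) (hf.differentiable (by simp) x) (hg.differentiable (by simp) x)
  simp only [pd, this, ContinuousLinearMap.add_apply, ContinuousLinearMap.smul_apply,
    smul_eq_mul]

lemma pd_sum {ι : Type*} {s : Finset ι} {f : ι → X3 → ℝ}
    (hf : ∀ j, ContDiff ℝ (⊤ : ℕ∞) (f j)) (i : Fin 3) (x : X3) :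
    pd i (fun y => ∑ j ∈ s, f j y) x = ∑ j ∈ s, pd i (f j) x := by
  have := fderiv_fun_sum (𝕜 := ℝ) (u := s) (A := fun j y => f j y) (x := x)
    (fun j _ => (hf j).differentiable (by simp) x)
  simp only [pd, this, ContinuousLinearMap.sum_apply]

lemma pd_comm {f : X3 → ℝ} (hf : ContDiff ℝ (⊤ : ℕ∞) f) (i j : Fin 3) (x : X3) :
    pd i (pd j f) x = pd j (pd i f) x := by
  have hdf : ∀ y, HasFDerivAt f (fderiv ℝ f y) y :=
    fun y => (hf.differentiable (by simp) y).hasFDerivAt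
  have h1 : ContDiff ℝ (⊤ : ℕ∞) (fderiv ℝ f) := hf.fderiv_right (by simp)
  have hx : HasFDerivAt (fderiv ℝ f) (fderiv ℝ (fderiv ℝ f) x) x :=
    (h1.differentiable (by simp) x).hasFDerivAt
  have key := second_derivative_symmetric hdf hx (Pi.single i 1) (Pi.single j 1)
  have e : ∀ (a b : Fin 3), pd a (pd b f) x =
      fderiv ℝ (fderiv ℝ f) x (Pi.single a 1) (Pi.single b 1) := by
    intro a b
    have h2 : pd b f = fun y => (fderiv ℝ f y) (Pi.single b 1) := rfl
    rw [pd, h2, fderiv_clm_apply (h1.differentiable (by simp) x)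
      (differentiableAt_const _)]
    simp
  rw [e i j, e j i, key]

lemma TPeriodic.pdp {f : X3 → ℝ} (hf : ContDiff ℝ (⊤ : ℕ∞) f) (hp : TPeriodic f) (i : Fin 3) :
    TPeriodic (pd i f) := by
  intro x k
  set c : X3 := fun i => 2 * π * (k i : ℝ) with hc
  have hfc : (fun y : X3 => f (y + c)) = f := funext fun y => hp y k
  have h1 : HasFDerivAt (fun y : X3 => y + c) (ContinuousLinearMap.id ℝ X3) x :=
    (hasFDerivAt_id x).add_const c
  have h2 : HasFDerivAt f (fderiv ℝ f (x + c)) (x + c) :=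
    (hf.differentiable (by simp) _).hasFDerivAt
  have h3 : HasFDerivAt (fun y : X3 => f (y + c))
      ((fderiv ℝ f (x + c)).comp (ContinuousLinearMap.id ℝ X3)) x := h2.comp x h1
  rw [hfc, ContinuousLinearMap.comp_id] at h3
  show fderiv ℝ f (x + c) (Pi.single i 1) = _
  rw [← h3.fderiv]; rfl

/-- Iterated-derivative exchange: the Laplacian of a partial derivative is the
partial derivative of the Laplacian. -/
lemma lap_pd {f : X3 → ℝ} (hf : ContDiff ℝ (⊤ : ℕ∞) f) (i : Fin 3) (x : X3) :
    ∑ j, pd j (pd j (pd i f)) x = pd i (fun y => ∑ j, pd j (pd j f) y) x := by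
  have step : ∀ j : Fin 3, pd j (pd j (pd i f)) x = pd i (pd j (pd j f)) x := by
    intro j
    have e1 : pd j (pd i f) = pd i (pd j f) := funext fun y => pd_comm hf j i y
    rw [e1, pd_comm (contDiff_pd hf j) j i x]
  rw [Finset.sum_congr rfl fun j _ => step j,
    ← pd_sum (fun j => contDiff_pd (contDiff_pd hf j) j) i x]

/-- The divergence theorem on the fundamental cube: integrals of divergences of
smooth periodic vector fields vanish. -/
lemma integral_div_zero (f : Fin 3 → X3 → ℝ) (hf : ∀ i, ContDiff ℝ (⊤ : ℕ∞) (f i))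
    (hp : ∀ i, TPeriodic (f i)) :
    ∫ x in cube, (∑ i, pd i (f i) x) = 0 := by
  have hle : (0 : Fin 3 → ℝ) ≤ (fun _ => 2 * π) := fun i => by positivity
  have hcont : Continuous fun x : X3 => ∑ i, pd i (f i) x :=
    continuous_finset_sum _ fun i _ => (contDiff_pd (hf i) i).continuous
  have key := MeasureTheory.integral_divergence_of_hasFDerivAt_off_countable'
    (a := (0 : Fin 3 → ℝ)) (b := fun _ => 2 * π) hle f
    (fun i x => fderiv ℝ (f i) x) ∅ Set.countable_empty
    (fun i => ((hf i).continuous).continuousOn)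
    (fun x _ i => ((hf i).differentiable (by simp) x).hasFDerivAt)
    (hcont.continuousOn.integrableOn_compact isCompact_Icc)
  have hface : ∀ i : Fin 3, ∀ x : Fin 2 → ℝ,
      f i (i.insertNth ((fun _ => 2 * π : Fin 3 → ℝ) i) x) =
      f i (i.insertNth ((0 : Fin 3 → ℝ) i) x) := by
    intro i x
    have h2 : i.insertNth ((fun _ => 2 * π : Fin 3 → ℝ) i) x =
        i.insertNth ((0 : Fin 3 → ℝ) i) x +
          fun j => 2 * π * ((Pi.single i 1 : Fin 3 → ℤ) j : ℝ) := by
      funext j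
      rcases eq_or_ne j i with rfl | hne
      · simp
      · obtain ⟨k, hk⟩ := Fin.exists_succAbove_eq hne
        rw [← hk]
        simp [Fin.insertNth_apply_succAbove,
          Pi.single_eq_of_ne (Fin.succAbove_ne i k)]
    rw [h2, hp i _ (Pi.single i 1)]
  exact key.trans (Finset.sum_eq_zero fun i _ => by
    rw [sub_eq_zero]
    exact setIntegral_congr_fun measurableSet_Icc fun x _ => hface i x)

/-- A continuous periodic nonnegative function with zero integral over the cube
vanishes identically. -/
lemma eq_zero_of_integral_zero {q : X3 → ℝ} (hq : Continuous q) (hqp : TPeriodic q)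
    (hq0 : ∀ x, 0 ≤ q x) (hint : ∫ x in cube, q x = 0) : ∀ x, q x = 0 := by
  intro x0
  by_contra hne
  have hx0 : 0 < q x0 := lt_of_le_of_ne (hq0 x0) (Ne.symm hne)
  have hU : IsOpen (q ⁻¹' Set.Ioi 0) := isOpen_Ioi.preimage hq
  obtain ⟨δ, hδ, hball⟩ := Metric.isOpen_iff.1 hU x0 hx0
  set k : Fin 3 → ℤ := fun j => -⌊x0 j / (2 * π)⌋ with hk
  set c : X3 := fun j => 2 * π * (k j : ℝ) with hc
  set y0 : X3 := x0 + c with hy0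
  have h2π : (0:ℝ) < 2 * π := by positivity
  have hy0mem : ∀ j, 0 ≤ y0 j ∧ y0 j < 2 * π := by
    intro j
    have : y0 j = 2 * π * Int.fract (x0 j / (2 * π)) := by
      simp only [hy0, hc, hk, Pi.add_apply, Int.fract]
      push_cast
      field_simp
      ring
    rw [this]
    constructor
    · exact mul_nonneg h2π.le (Int.fract_nonneg _)
    · calc 2 * π * Int.fract (x0 j / (2 * π)) < 2 * π * 1 := by
            exact (mul_lt_mul_iff_right₀ h2π).2 (Int.fract_lt_one _)
          _ = 2 * π := mul_one _
  have hballp : ∀ z : X3, dist z y0 < δ → 0 < q z := by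
    intro z hz
    have h1 : dist (z - c) x0 < δ := by
      have : z - c - x0 = z - y0 := by rw [hy0]; abel
      rw [dist_eq_norm, this, ← dist_eq_norm]; exact hz
    have h2 : 0 < q (z - c) := hball h1
    have h3 : q ((z - c) + c) = q (z - c) := hqp (z - c) k
    have h4 : z - c + c = z := by abel
    rw [h4] at h3
    rw [h3]; exact h2
  set B : Set X3 := Set.pi Set.univ fun j =>
    Set.Ioo (max 0 (y0 j - δ/2)) (min (2*π) (y0 j + δ/2)) with hB
  have hBlt : ∀ j : Fin 3, max 0 (y0 j - δ/2) < min (2*π) (y0 j + δ/2) := by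
    intro j
    obtain ⟨h1, h2⟩ := hy0mem j
    rw [max_lt_iff]
    constructor
    · rw [lt_min_iff]; constructor <;> [positivity; linarith]
    · rw [lt_min_iff]; constructor <;> linarith
  have hBball : ∀ z ∈ B, dist z y0 < δ := by
    intro z hz
    rw [dist_pi_lt_iff hδ]
    intro j
    have hj := hz j (Set.mem_univ j)
    obtain ⟨hl, hr⟩ := hj
    have h1 : y0 j - δ/2 ≤ max 0 (y0 j - δ/2) := le_max_right _ _
    have h2 : min (2*π) (y0 j + δ/2) ≤ y0 j + δ/2 := min_le_right _ _
    rw [Real.dist_eq, abs_sub_lt_iff]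
    constructor <;> linarith
  have hBcube : B ⊆ cube := by
    intro z hz
    constructor <;> intro j
    · have hj := hz j (Set.mem_univ j)
      have : (0:ℝ) ≤ max 0 (y0 j - δ/2) := le_max_left _ _
      exact le_of_lt (lt_of_le_of_lt this hj.1)
    · have hj := hz j (Set.mem_univ j)
      have : min (2*π) (y0 j + δ/2) ≤ 2*π := min_le_left _ _
      exact le_of_lt (lt_of_lt_of_le hj.2 this)
  have hBpos : 0 < volume B := by
    rw [hB, volume_pi_pi]
    rw [CanonicallyOrderedAdd.prod_pos]
    intro j _
    rw [Real.volume_Ioo]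
    exact ENNReal.ofReal_pos.2 (by linarith [hBlt j])
  have hInt : IntegrableOn q cube :=
    hq.continuousOn.integrableOn_compact isCompact_Icc
  have h0le : 0 ≤ᵐ[volume.restrict cube] q := Filter.Eventually.of_forall hq0
  have hsupp : B ⊆ Function.support q ∩ cube := by
    intro z hz
    exact ⟨ne_of_gt (hballp z (hBball z hz)), hBcube hz⟩
  have hlt : 0 < volume (Function.support q ∩ cube) :=
    lt_of_lt_of_le hBpos (measure_mono hsupp)
  have := (setIntegral_pos_iff_support_of_nonneg_ae h0le hInt).2 hlt
  rw [hint] at this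
  exact lt_irrefl 0 this

/-- A smooth periodic harmonic function on the torus has vanishing gradient. -/
lemma pd_eq_zero_of_harmonic {h : X3 → ℝ} (hh : ContDiff ℝ (⊤ : ℕ∞) h) (hp : TPeriodic h)
    (hl : ∀ x, ∑ j, pd j (pd j h) x = 0) : ∀ x i, pd i h x = 0 := by
  set q : X3 → ℝ := fun x => ∑ j, (pd j h x)^2 with hqdef
  set F : Fin 3 → X3 → ℝ := fun j y => h y * pd j h y with hF
  have hFsm : ∀ j, ContDiff ℝ (⊤ : ℕ∞) (F j) := fun j => hh.mul (contDiff_pd hh j)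
  have hFper : ∀ j, TPeriodic (F j) := by
    intro j x k
    show h _ * pd j h _ = h x * pd j h x
    rw [hp x k, (hp.pdp hh j) x k]
  have hdiv : ∀ x, ∑ j, pd j (F j) x = q x := by
    intro x
    have e : ∀ j : Fin 3, pd j (F j) x = h x * pd j (pd j h) x + pd j h x * pd j h x :=
      fun j => pd_mul hh (contDiff_pd hh j) j x
    simp only [e, hqdef]
    rw [Finset.sum_add_distrib, ← Finset.mul_sum, hl x, mul_zero, zero_add]
    congr 1; funext j; ring
  have hqint : ∫ x in cube, q x = 0 := by
    have h1 := integral_div_zero F hFsm hFper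
    rw [show (fun x => q x) = fun x => ∑ j, pd j (F j) x from funext fun x => (hdiv x).symm]
    exact h1
  have hqc : Continuous q :=
    continuous_finset_sum _ fun j _ => ((contDiff_pd hh j).continuous).pow 2
  have hqp : TPeriodic q := by
    intro x k
    show ∑ j, (pd j h _)^2 = _
    simp only [fun j : Fin 3 => (hp.pdp hh j) x k]
    rfl
  have hq0 : ∀ x, 0 ≤ q x := fun x => Finset.sum_nonneg fun j _ => sq_nonneg _
  have hz := eq_zero_of_integral_zero hqc hqp hq0 hqint
  intro x i
  have := (Finset.sum_eq_zero_iff_of_nonneg (fun j _ => sq_nonneg (pd j h x))).1 (hz x)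
    i (Finset.mem_univ i)
  exact pow_eq_zero_iff (n := 2) (by norm_num) |>.1 this

/-- The core computation: the gradient of
`G = (1/4)(𝒫u₁ − 𝒫u₂) + (3/4)(u₁ − u₂) − v` vanishes identically. -/
lemma main_aux (v w : X3 → X3) (hv : ContDiff ℝ (⊤ : ℕ∞) v) (hvp : TPeriodic v)
    (S : X3 → Fin 3 → Fin 3 → ℝ)
    (hS : ∀ x i j, S x i j =
      pd j (fun y => v y i) x + pd i (fun y => v y j) x -
      (2 / 3) * (if i = j then (∑ l, pd l (fun y => v y l) x) else 0))
    (hw : ∀ x i, w x i = v x i - ∑ j, pd j (fun y => S y i j) x)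
    (u1 P1 : X3 → X3) (φ1 : X3 → ℝ)
    (hu1s : ContDiff ℝ (⊤ : ℕ∞) u1) (hu1p : TPeriodic u1)
    (hP1s : ContDiff ℝ (⊤ : ℕ∞) P1) (hP1p : TPeriodic P1) (hφ1s : ContDiff ℝ (⊤ : ℕ∞) φ1)
    (hlap1 : ∀ x i, (∑ j, pd j (fun y => pd j (fun z => u1 z i) y) x) =
      v x i - ((2 * π) ^ 3)⁻¹ * ∫ y in cube, v y i)
    (hdivP1 : ∀ x, ∑ i, pd i (fun y => P1 y i) x = 0)
    (hgrad1 : ∀ x i, u1 x i - P1 x i = pd i φ1 x)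
    (u2 P2 : X3 → X3) (φ2 : X3 → ℝ)
    (hu2s : ContDiff ℝ (⊤ : ℕ∞) u2) (hu2p : TPeriodic u2)
    (hP2s : ContDiff ℝ (⊤ : ℕ∞) P2) (hP2p : TPeriodic P2) (hφ2s : ContDiff ℝ (⊤ : ℕ∞) φ2)
    (hlap2 : ∀ x i, (∑ j, pd j (fun y => pd j (fun z => u2 z i) y) x) =
      w x i - ((2 * π) ^ 3)⁻¹ * ∫ y in cube, w y i)
    (hdivP2 : ∀ x, ∑ i, pd i (fun y => P2 y i) x = 0)
    (hgrad2 : ∀ x i, u2 x i - P2 x i = pd i φ2 x) :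
    (∀ x (i j : Fin 3),
      (1/4) * (pd j (fun y => P1 y i) x - pd j (fun y => P2 y i) x)
      + (3/4) * (pd j (fun y => u1 y i) x - pd j (fun y => u2 y i) x)
      - pd j (fun y => v y i) x = 0)
    ∧ (∀ x : X3, (∑ l, pd l (fun y => u1 y l) x) - (∑ l, pd l (fun y => u2 y l) x)
        = (4/3) * ∑ l, pd l (fun y => v y l) x) := by
  -- component smoothness
  have hvc : ∀ i, ContDiff ℝ (⊤ : ℕ∞) (fun y => v y i) := fun i => contDiff_pi.1 hv i
  have hu1c : ∀ i, ContDiff ℝ (⊤ : ℕ∞) (fun y => u1 y i) := fun i => contDiff_pi.1 hu1s i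
  have hu2c : ∀ i, ContDiff ℝ (⊤ : ℕ∞) (fun y => u2 y i) := fun i => contDiff_pi.1 hu2s i
  have hP1c : ∀ i, ContDiff ℝ (⊤ : ℕ∞) (fun y => P1 y i) := fun i => contDiff_pi.1 hP1s i
  have hP2c : ∀ i, ContDiff ℝ (⊤ : ℕ∞) (fun y => P2 y i) := fun i => contDiff_pi.1 hP2s i
  -- component periodicity
  have hvpc : ∀ i, TPeriodic (fun y => v y i) := fun i x k => congrFun (hvp x k) i
  have hu1pc : ∀ i, TPeriodic (fun y => u1 y i) := fun i x k => congrFun (hu1p x k) i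
  have hu2pc : ∀ i, TPeriodic (fun y => u2 y i) := fun i x k => congrFun (hu2p x k) i
  have hP1pc : ∀ i, TPeriodic (fun y => P1 y i) := fun i x k => congrFun (hP1p x k) i
  have hP2pc : ∀ i, TPeriodic (fun y => P2 y i) := fun i x k => congrFun (hP2p x k) i
  -- difference functions
  have hUc : ∀ i, ContDiff ℝ (⊤ : ℕ∞) (fun y => u1 y i - u2 y i) := fun i => (hu1c i).sub (hu2c i)
  have hPc : ∀ i, ContDiff ℝ (⊤ : ℕ∞) (fun y => P1 y i - P2 y i) := fun i => (hP1c i).sub (hP2c i)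
  have hφc : ContDiff ℝ (⊤ : ℕ∞) (fun y => φ1 y - φ2 y) := hφ1s.sub hφ2s
  -- divergence of v
  have hdvc : ContDiff ℝ (⊤ : ℕ∞) (fun y => ∑ l, pd l (fun z => v z l) y) :=
    ContDiff.sum fun l _ => contDiff_pd (hvc l) l
  have hpdvper : ∀ (a b : Fin 3) (x : X3) (k : Fin 3 → ℤ),
      pd a (fun y => v y b) (x + fun i => 2 * π * (k i : ℝ)) = pd a (fun y => v y b) x :=
    fun a b x k => TPeriodic.pdp (hvc b) (hvpc b) a x k
  -- smoothness of the entries of S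
  have hSfun : ∀ (i j : Fin 3), (fun y => S y i j) =
      fun y => pd j (fun z => v z i) y + pd i (fun z => v z j) y -
        (2/3) * (if i = j then (∑ l, pd l (fun z => v z l) y) else 0) :=
    fun i j => funext fun y => hS y i j
  have hSc : ∀ (i j : Fin 3), ContDiff ℝ (⊤ : ℕ∞) (fun y => S y i j) := by
    intro i j
    rw [hSfun i j]
    rcases eq_or_ne i j with rfl | hij
    · simp only [if_pos rfl]
      exact ((contDiff_pd (hvc i) i).add (contDiff_pd (hvc i) i)).sub
        (contDiff_const.mul hdvc)
    · simp only [if_neg hij, mul_zero, sub_zero]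
      exact (contDiff_pd (hvc i) j).add (contDiff_pd (hvc j) i)
  have hSper : ∀ (i j : Fin 3), TPeriodic (fun y => S y i j) := by
    intro i j x k
    show S _ i j = S x i j
    rw [hS _ i j, hS x i j, hpdvper j i x k, hpdvper i j x k]
    rcases eq_or_ne i j with rfl | hij
    · simp only [if_pos rfl]
      congr 2
      exact Finset.sum_congr rfl fun l _ => hpdvper l l x k
    · simp only [if_neg hij]
  -- expansion of div S
  have hSexp : ∀ (x : X3) (i : Fin 3), (∑ j, pd j (fun y => S y i j) x) =
      (∑ j, pd j (pd j (fun z => v z i)) x) +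
      (1/3) * pd i (fun y => ∑ l, pd l (fun z => v z l) y) x := by
    intro x i
    have term : ∀ j : Fin 3, pd j (fun y => S y i j) x =
        pd j (pd j (fun z => v z i)) x + pd i (pd j (fun z => v z j)) x -
        (if i = j then (2/3) * pd j (fun y => ∑ l, pd l (fun z => v z l) y) x else 0) := by
      intro j
      rcases eq_or_ne i j with rfl | hij
      · rw [hSfun i i]
        simp only [eq_self_iff_true, if_true]
        rw [pd_sub ((contDiff_pd (hvc i) i).add (contDiff_pd (hvc i) i))
          (contDiff_const.mul hdvc) i x,
          pd_add (contDiff_pd (hvc i) i) (contDiff_pd (hvc i) i) i x,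
          pd_const_mul hdvc (2/3) i x]
      · rw [hSfun i j]
        simp only [if_neg hij, mul_zero, sub_zero]
        rw [pd_add (contDiff_pd (hvc i) j) (contDiff_pd (hvc j) i) j x,
          pd_comm (hvc j) j i x]
    rw [Finset.sum_congr rfl fun j _ => term j]
    rw [Finset.sum_sub_distrib, Finset.sum_add_distrib]
    have h1 : ∑ j : Fin 3, pd i (pd j (fun z => v z j)) x =
        pd i (fun y => ∑ l, pd l (fun z => v z l) y) x :=
      (pd_sum (fun j => contDiff_pd (hvc j) j) i x).symm
    have h2 : (∑ j : Fin 3, if i = j then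
        (2/3) * pd j (fun y => ∑ l, pd l (fun z => v z l) y) x else 0) =
        (2/3) * pd i (fun y => ∑ l, pd l (fun z => v z l) y) x := by
      rw [Finset.sum_ite_eq]
      simp
    rw [h1, h2]
    ring
  -- the averages of v and w agree
  have hAvg : ∀ i : Fin 3, (∫ y in cube, w y i) = ∫ y in cube, v y i := by
    intro i
    have hcube : MeasurableSet cube := measurableSet_Icc
    have e1 : ∫ y in cube, w y i =
        ∫ y in cube, (v y i - ∑ j, pd j (fun z => S z i j) y) :=
      setIntegral_congr_fun hcube fun y _ => hw y i
    have hi1 : IntegrableOn (fun y => v y i) cube :=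
      (hvc i).continuous.continuousOn.integrableOn_compact isCompact_Icc
    have hi2 : IntegrableOn (fun y => ∑ j, pd j (fun z => S z i j) y) cube :=
      (continuous_finset_sum _ fun j _ =>
        (contDiff_pd (hSc i j) j).continuous).continuousOn.integrableOn_compact isCompact_Icc
    rw [e1, MeasureTheory.integral_sub hi1 hi2,
      integral_div_zero (fun j => fun y => S y i j) (fun j => hSc i j) (fun j => hSper i j),
      sub_zero]
  -- Laplacian of the difference u₁ − u₂
  have hlapu : ∀ (x : X3) (i : Fin 3),
      (∑ j, pd j (pd j (fun y => u1 y i - u2 y i)) x) = v x i - w x i := by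
    intro x i
    have e1 : ∀ j : Fin 3, pd j (fun y => u1 y i - u2 y i) =
        fun y => pd j (fun z => u1 z i) y - pd j (fun z => u2 z i) y :=
      fun j => funext fun y => pd_sub (hu1c i) (hu2c i) j y
    have e2 : ∀ j : Fin 3, pd j (pd j (fun y => u1 y i - u2 y i)) x =
        pd j (pd j (fun z => u1 z i)) x - pd j (pd j (fun z => u2 z i)) x := by
      intro j
      rw [e1 j]
      exact pd_sub (contDiff_pd (hu1c i) j) (contDiff_pd (hu2c i) j) j x
    rw [Finset.sum_congr rfl fun j _ => e2 j, Finset.sum_sub_distrib]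
    have l1 : (∑ j, pd j (pd j (fun z => u1 z i)) x) =
        v x i - ((2 * π) ^ 3)⁻¹ * ∫ y in cube, v y i := hlap1 x i
    have l2 : (∑ j, pd j (pd j (fun z => u2 z i)) x) =
        w x i - ((2 * π) ^ 3)⁻¹ * ∫ y in cube, w y i := hlap2 x i
    rw [l1, l2, hAvg i]
    ring
  -- v − w in terms of derivatives of v
  have hvw : ∀ (x : X3) (i : Fin 3), v x i - w x i =
      (∑ j, pd j (pd j (fun z => v z i)) x) +
      (1/3) * pd i (fun y => ∑ l, pd l (fun z => v z l) y) x := by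
    intro x i
    rw [hw x i, ← hSexp x i]
    ring
  -- divergence of u₁ − u₂ equals the Laplacian of φ₁ − φ₂
  have hdu : ∀ x : X3, (∑ l, pd l (fun y => u1 y l - u2 y l) x) =
      ∑ j, pd j (pd j (fun y => φ1 y - φ2 y)) x := by
    intro x
    have e1 : ∀ l : Fin 3, (fun y => u1 y l - u2 y l) =
        fun y => (P1 y l - P2 y l) + pd l (fun z => φ1 z - φ2 z) y := by
      intro l
      funext y
      have h1 : pd l (fun z => φ1 z - φ2 z) y = pd l φ1 y - pd l φ2 y :=
        pd_sub hφ1s hφ2s l y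
      have h2 := hgrad1 y l
      have h3 := hgrad2 y l
      rw [h1, ← h2, ← h3]
      ring
    have e2 : ∀ l : Fin 3, pd l (fun y => u1 y l - u2 y l) x =
        (pd l (fun y => P1 y l) x - pd l (fun y => P2 y l) x) +
        pd l (pd l (fun y => φ1 y - φ2 y)) x := by
      intro l
      rw [e1 l, pd_add (hPc l) (contDiff_pd hφc l) l x, pd_sub (hP1c l) (hP2c l) l x]
    rw [Finset.sum_congr rfl fun l _ => e2 l, Finset.sum_add_distrib,
      Finset.sum_sub_distrib, hdivP1 x, hdivP2 x]
    ring
  -- smoothness of div (u₁ − u₂)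
  have hduc : ContDiff ℝ (⊤ : ℕ∞) (fun y => ∑ l, pd l (fun z => u1 z l - u2 z l) y) :=
    ContDiff.sum fun l _ => contDiff_pd (hUc l) l
  -- Laplacian of P₁ − P₂
  have hlapP : ∀ (x : X3) (i : Fin 3),
      (∑ j, pd j (pd j (fun y => P1 y i - P2 y i)) x) =
      (∑ j, pd j (pd j (fun y => u1 y i - u2 y i)) x) -
      pd i (fun y => ∑ l, pd l (fun z => u1 z l - u2 z l) y) x := by
    intro x i
    have e1 : (fun y => P1 y i - P2 y i) =
        fun y => (u1 y i - u2 y i) - pd i (fun z => φ1 z - φ2 z) y := by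
      funext y
      have h1 : pd i (fun z => φ1 z - φ2 z) y = pd i φ1 y - pd i φ2 y :=
        pd_sub hφ1s hφ2s i y
      have h2 := hgrad1 y i
      have h3 := hgrad2 y i
      rw [h1, ← h2, ← h3]
      ring
    have e2 : ∀ j : Fin 3, pd j (pd j (fun y => P1 y i - P2 y i)) x =
        pd j (pd j (fun y => u1 y i - u2 y i)) x -
        pd j (pd j (pd i (fun z => φ1 z - φ2 z))) x := by
      intro j
      have e1' : pd j (fun y => P1 y i - P2 y i) =
          fun y => pd j (fun z => u1 z i - u2 z i) y -
            pd j (pd i (fun z => φ1 z - φ2 z)) y := by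
        funext y
        rw [e1]
        exact pd_sub (hUc i) (contDiff_pd hφc i) j y
      rw [e1']
      exact pd_sub (contDiff_pd (hUc i) j) (contDiff_pd (contDiff_pd hφc i) j) j x
    rw [Finset.sum_congr rfl fun j _ => e2 j, Finset.sum_sub_distrib]
    have e3 : (∑ j, pd j (pd j (pd i (fun z => φ1 z - φ2 z))) x) =
        pd i (fun y => ∑ j, pd j (pd j (fun z => φ1 z - φ2 z)) y) x := lap_pd hφc i x
    have e4 : (fun y => ∑ j, pd j (pd j (fun z => φ1 z - φ2 z)) y) =
        fun y => ∑ l, pd l (fun z => u1 z l - u2 z l) y :=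
      funext fun y => (hdu y).symm
    rw [e3, e4]
  -- the vector field G
  set G : Fin 3 → X3 → ℝ := fun i y =>
    (1/4) * (P1 y i - P2 y i) + (3/4) * (u1 y i - u2 y i) - v y i with hGdef
  have hGsm : ∀ i, ContDiff ℝ (⊤ : ℕ∞) (G i) := fun i =>
    ((contDiff_const.mul (hPc i)).add (contDiff_const.mul (hUc i))).sub (hvc i)
  have hGper : ∀ i, TPeriodic (G i) := by
    intro i x k
    simp only [hGdef]
    rw [hu1p x k, hu2p x k, hP1p x k, hP2p x k, hvp x k]
  have hGpd : ∀ (x : X3) (i j : Fin 3), pd j (G i) x =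
      (1/4) * pd j (fun y => P1 y i - P2 y i) x
      + (3/4) * pd j (fun y => u1 y i - u2 y i) x
      - pd j (fun y => v y i) x := by
    intro x i j
    simp only [hGdef]
    rw [pd_sub ((contDiff_const.mul (hPc i)).add (contDiff_const.mul (hUc i))) (hvc i) j x,
      pd_add (contDiff_const.mul (hPc i)) (contDiff_const.mul (hUc i)) j x,
      pd_const_mul (hPc i) (1/4) j x, pd_const_mul (hUc i) (3/4) j x]
  -- the divergence of G
  set rho : X3 → ℝ := fun x => ∑ l, pd l (G l) x with hrhodef
  have hrhoc : ContDiff ℝ (⊤ : ℕ∞) rho := ContDiff.sum fun l _ => contDiff_pd (hGsm l) l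
  have hrhoper : TPeriodic rho := by
    intro x k
    simp only [hrhodef]
    exact Finset.sum_congr rfl fun l _ =>
      (TPeriodic.pdp (hGsm l) (hGper l) l) x k
  have hrho_eq : ∀ x : X3, rho x =
      (3/4) * (∑ l, pd l (fun y => u1 y l - u2 y l) x)
      - ∑ l, pd l (fun y => v y l) x := by
    intro x
    simp only [hrhodef]
    rw [Finset.sum_congr rfl fun l _ => hGpd x l l]
    have hPdiv : (∑ l, pd l (fun y => P1 y l - P2 y l) x) = 0 := by
      rw [Finset.sum_congr rfl fun l _ => pd_sub (hP1c l) (hP2c l) l x,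
        Finset.sum_sub_distrib, hdivP1 x, hdivP2 x, sub_zero]
    rw [Finset.sum_sub_distrib, Finset.sum_add_distrib, ← Finset.mul_sum, ← Finset.mul_sum,
      hPdiv]
    ring
  have hrho_fun : rho = fun x =>
      (3/4) * (∑ l, pd l (fun y => u1 y l - u2 y l) x)
      - ∑ l, pd l (fun y => v y l) x := funext hrho_eq
  -- the Laplacian of G
  have hlapG : ∀ (x : X3) (i : Fin 3),
      (∑ j, pd j (pd j (G i)) x) = -(1/3) * pd i rho x := by
    intro x i
    have e1 : ∀ j : Fin 3, pd j (G i) =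
        fun y => (1/4) * pd j (fun z => P1 z i - P2 z i) y
          + (3/4) * pd j (fun z => u1 z i - u2 z i) y
          - pd j (fun z => v z i) y :=
      fun j => funext fun y => hGpd y i j
    have e2 : ∀ j : Fin 3, pd j (pd j (G i)) x =
        (1/4) * pd j (pd j (fun z => P1 z i - P2 z i)) x
        + (3/4) * pd j (pd j (fun z => u1 z i - u2 z i)) x
        - pd j (pd j (fun z => v z i)) x := by
      intro j
      rw [e1 j]
      rw [pd_sub ((contDiff_const.mul (contDiff_pd (hPc i) j)).add
          (contDiff_const.mul (contDiff_pd (hUc i) j))) (contDiff_pd (hvc i) j) j x,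
        pd_add (contDiff_const.mul (contDiff_pd (hPc i) j))
          (contDiff_const.mul (contDiff_pd (hUc i) j)) j x,
        pd_const_mul (contDiff_pd (hPc i) j) (1/4) j x,
        pd_const_mul (contDiff_pd (hUc i) j) (3/4) j x]
    rw [Finset.sum_congr rfl fun j _ => e2 j, Finset.sum_sub_distrib,
      Finset.sum_add_distrib, ← Finset.mul_sum, ← Finset.mul_sum]
    rw [hlapP x i, hlapu x i, hvw x i]
    have e5 : pd i rho x = (3/4) * pd i (fun y => ∑ l, pd l (fun z => u1 z l - u2 z l) y) x
        - pd i (fun y => ∑ l, pd l (fun z => v z l) y) x := by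
      rw [hrho_fun]
      rw [pd_sub (contDiff_const.mul hduc) hdvc i x, pd_const_mul hduc (3/4) i x]
    rw [e5]
    ring
  -- rho is harmonic
  have hlaprho : ∀ x : X3, (∑ j, pd j (pd j rho) x) = 0 := by
    intro x
    have e1 : ∀ j : Fin 3, pd j rho = fun y => ∑ l, pd j (pd l (G l)) y := by
      intro j
      funext y
      simp only [hrhodef]
      exact pd_sum (fun l => contDiff_pd (hGsm l) l) j y
    have e2 : ∀ j : Fin 3, pd j (pd j rho) x = ∑ l, pd j (pd j (pd l (G l))) x := by
      intro j
      rw [e1 j]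
      exact pd_sum (fun l => contDiff_pd (contDiff_pd (hGsm l) l) j) j x
    have e3 : ∀ (j l : Fin 3), pd j (pd j (pd l (G l))) x =
        pd l (pd j (pd j (G l))) x := by
      intro j l
      have h1 : pd j (pd l (G l)) = pd l (pd j (G l)) :=
        funext fun y => pd_comm (hGsm l) j l y
      rw [h1]
      exact pd_comm (contDiff_pd (hGsm l) j) j l x
    have e4 : ∀ l : Fin 3, (∑ j, pd l (pd j (pd j (G l))) x) =
        pd l (fun y => ∑ j, pd j (pd j (G l)) y) x :=
      fun l => (pd_sum (fun j => contDiff_pd (contDiff_pd (hGsm l) j) j) l x).symm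
    have e6 : ∀ l : Fin 3, (fun y => ∑ j, pd j (pd j (G l)) y) =
        fun y => -(1/3) * pd l rho y := fun l => funext fun y => hlapG y l
    have e7 : ∀ l : Fin 3, pd l (fun y => -(1/3) * pd l rho y) x =
        -(1/3) * pd l (pd l rho) x := fun l => pd_const_mul (contDiff_pd hrhoc l) _ l x
    have key : (∑ j, pd j (pd j rho) x) = -(1/3) * ∑ j, pd j (pd j rho) x := by
      calc (∑ j, pd j (pd j rho) x) = ∑ j, ∑ l, pd j (pd j (pd l (G l))) x :=
            Finset.sum_congr rfl fun j _ => e2 j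
        _ = ∑ l, ∑ j, pd j (pd j (pd l (G l))) x := Finset.sum_comm
        _ = ∑ l, ∑ j, pd l (pd j (pd j (G l))) x :=
            Finset.sum_congr rfl fun l _ => Finset.sum_congr rfl fun j _ => e3 j l
        _ = ∑ l, pd l (fun y => ∑ j, pd j (pd j (G l)) y) x :=
            Finset.sum_congr rfl fun l _ => e4 l
        _ = ∑ l, (-(1/3) * pd l (pd l rho) x) := by
            refine Finset.sum_congr rfl fun l _ => ?_
            rw [e6 l]
            exact e7 l
        _ = -(1/3) * ∑ j, pd j (pd j rho) x := by rw [← Finset.mul_sum]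
    linarith [key]
  -- conclude: rho has vanishing gradient, hence G is harmonic, hence ∇G = 0
  have hpdrho : ∀ (x : X3) (i : Fin 3), pd i rho x = 0 :=
    pd_eq_zero_of_harmonic hrhoc hrhoper hlaprho
  have hlapG0 : ∀ (i : Fin 3) (x : X3), (∑ j, pd j (pd j (G i)) x) = 0 := by
    intro i x
    rw [hlapG x i, hpdrho x i, mul_zero]
  have hGzero : ∀ (i : Fin 3) (x : X3) (j : Fin 3), pd j (G i) x = 0 := by
    intro i
    have := pd_eq_zero_of_harmonic (hGsm i) (hGper i) (hlapG0 i)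
    exact fun x j => this x j
  constructor
  · intro x i j
    have h1 := hGzero i x j
    rw [hGpd x i j] at h1
    rw [pd_sub (hP1c i) (hP2c i) j x, pd_sub (hu1c i) (hu2c i) j x] at h1
    linarith [h1]
  · intro x
    have h1 : rho x = 0 := by
      simp only [hrhodef]
      exact Finset.sum_eq_zero fun l _ => hGzero l x l
    rw [hrho_eq x] at h1
    have h2 : (∑ l, pd l (fun y => u1 y l - u2 y l) x) =
        (∑ l, pd l (fun y => u1 y l) x) - ∑ l, pd l (fun y => u2 y l) x := by
      rw [Finset.sum_congr rfl fun l _ => pd_sub (hu1c l) (hu2c l) l x,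
        Finset.sum_sub_distrib]
    rw [h2] at h1
    linarith [h1]

/-- the identity `ℛ(v) = 𝒮(v) + ℛ(v − div 𝒮(v))`, where
`𝒮(w) = ∇w + (∇w)ᵀ − (2/3)(div w) Id`. -/
theorem inverse_divergence_identity (v : X3 → X3)
    (hv : ContDiff ℝ (⊤ : ℕ∞) v) (hvp : TPeriodic v)
    (S : X3 → Fin 3 → Fin 3 → ℝ)
    (hS : ∀ x i j, S x i j =
      pd j (fun y => v y i) x + pd i (fun y => v y j) x -
      (2 / 3) * (if i = j then (∑ l, pd l (fun y => v y l) x) else 0))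
    (w : X3 → X3)
    (hw : ∀ x i, w x i = v x i - ∑ j, pd j (fun y => S y i j) x)
    (Rv Rw : X3 → Fin 3 → Fin 3 → ℝ)
    (hRv : IsInvDivR v Rv) (hRw : IsInvDivR w Rw) :
    ∀ x i j, Rv x i j = S x i j + Rw x i j := by
  obtain ⟨u1, P1, φ1, hu1s, hu1p, hP1s, hP1p, hφ1s, _h01, hlap1, hdivP1, hgrad1, hR1⟩ := hRv
  obtain ⟨u2, P2, φ2, hu2s, hu2p, hP2s, hP2p, hφ2s, _h02, hlap2, hdivP2, hgrad2, hR2⟩ := hRw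
  obtain ⟨key1, key2⟩ := main_aux v w hv hvp S hS hw u1 P1 φ1 hu1s hu1p hP1s hP1p hφ1s
    hlap1 hdivP1 hgrad1 u2 P2 φ2 hu2s hu2p hP2s hP2p hφ2s hlap2 hdivP2 hgrad2
  intro x i j
  rw [hR1 x i j, hR2 x i j, hS x i j]
  have k1 := key1 x i j
  have k2 := key1 x j i
  have k3 := key2 x
  rcases eq_or_ne i j with rfl | hij
  · simp only [eq_self_iff_true, if_true]
    linarith [k1, k3]
  · simp only [if_neg hij]
    linarith [k1, k2]

end
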